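/- arXiv:2311.07112 — 6 statements merged into one kernel-verified Lean document; each statement's English description precedes it below -/
import Mathlib

section
/- Let A be an additive group with subgroups B and C such that B ∩ C = {0} and A = B + C. Define a∘a₁ = b + a₁ + c where a = b + c with b ∈ B, c ∈ C. Then (A,+,∘) is a skew brace, and (A,∘) is isomorphic to the direct product B × C^op. -/
/-! Writing `x = b + c`, the map `circ x` is `y ↦ b + y + c`: a left translation by `b ∈ B` composed
with a right translation by `c ∈ C`. Left and right translations commute, so composing two such maps
multiplies the `B`-parts in order and the `C`-parts in reverse order; this is the isomorphism with
`B × Cᵒᵖ`, and associativity, unit and inverses follow from it. The brace identity is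
`b + (y + z) + c = (b + y + c) - (b + c) + (b + z + c)`. -/

namespace ExactFactorization

variable {A : Type*} [AddGroup A] {B C : AddSubgroup A} {circ : A → A → A}

@[elab_as_elim]
theorem induction_on_add (hBC : Function.Surjective fun p : B × C => (p.1 : A) + p.2)
    {P : A → Prop} (a : A) (h : ∀ (b : B) (c : C), P (b + c)) : P a := by
  obtain ⟨⟨b, c⟩, rfl⟩ := hBC a
  exact h b c

section

variable (hcirc : ∀ (b : B) (c : C) (a₁ : A), circ ((b : A) + (c : A)) a₁ = (b : A) + a₁ + (c : A))
include hcirc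

theorem circ_add_add (b₁ b₂ : B) (c₁ c₂ : C) :
    circ (b₁ + c₁) (b₂ + c₂) = ((b₁ + b₂ : B) : A) + ((c₂ + c₁ : C) : A) := by
  rw [hcirc]
  push_cast
  simp only [add_assoc]

theorem zero_circ (x : A) : circ 0 x = x := by
  simpa using hcirc 0 0 x

variable (hBC : Function.Surjective fun p : B × C => (p.1 : A) + p.2)
include hBC

theorem circ_assoc (x y z : A) : circ (circ x y) z = circ x (circ y z) :=
  induction_on_add hBC x fun b₁ c₁ => induction_on_add hBC y fun b₂ c₂ => by
    rw [circ_add_add hcirc, hcirc, hcirc, hcirc]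
    push_cast
    simp only [add_assoc]

theorem circ_zero (x : A) : circ x 0 = x :=
  induction_on_add hBC x fun b c => by rw [hcirc, add_zero]

theorem exists_circ_inverse (x : A) : ∃ y : A, circ x y = 0 ∧ circ y x = 0 :=
  induction_on_add hBC x fun b c => ⟨((-b : B) : A) + ((-c : C) : A), by
    simp only [circ_add_add hcirc, add_neg_cancel, neg_add_cancel, AddSubgroup.coe_zero,
      add_zero, and_self]⟩

theorem circ_add (a x y : A) : circ a (x + y) = circ a x + -a + circ a y :=
  induction_on_add hBC a fun b c => by
    simp only [hcirc, neg_add_rev, add_assoc, neg_add_cancel_left, add_neg_cancel_left]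

end

end ExactFactorization

open ExactFactorization in
/-- Exact factorizations give skew braces: if `A = B + C` is an exact factorization
of the additive group `A`, then `a ∘ a₁ = b + a₁ + c` (where `a = b + c`, `b ∈ B`,
`c ∈ C`) defines a group structure on `A` making `(A,+,∘)` a skew brace, and
`(A,∘)` is isomorphic to `B × Cᵒᵖ` (encoded by the multiplicative bijection `f`). -/
theorem exact_factorization_skewBrace (A : Type*) [AddGroup A]
    (B C : AddSubgroup A)
    (hfact : ∀ a : A, ∃! p : B × C, a = (p.1 : A) + (p.2 : A))
    (circ : A → A → A)
    (hcirc : ∀ (b : B) (c : C) (a₁ : A), circ ((b : A) + (c : A)) a₁ = (b : A) + a₁ + (c : A)) :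
    (∀ x y z : A, circ (circ x y) z = circ x (circ y z)) ∧
    (∀ x : A, circ 0 x = x) ∧ (∀ x : A, circ x 0 = x) ∧
    (∀ x : A, ∃ y : A, circ x y = 0 ∧ circ y x = 0) ∧
    (∀ a b c : A, circ a (b + c) = circ a b + -a + circ a c) ∧
    (∃ f : B × C → A, Function.Bijective f ∧
      ∀ (b₁ b₂ : B) (c₁ c₂ : C),
        circ (f (b₁, c₁)) (f (b₂, c₂)) = f (b₁ + b₂, c₂ + c₁)) := by
  have hbij : Function.Bijective fun p : B × C => (p.1 : A) + p.2 :=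
    (Function.bijective_iff_existsUnique _).mpr fun a => by simpa only [eq_comm] using hfact a
  exact ⟨circ_assoc hcirc hbij.2, zero_circ hcirc, circ_zero hcirc hbij.2,
    exists_circ_inverse hcirc hbij.2, circ_add hcirc hbij.2,
    _, hbij, circ_add_add hcirc⟩
end

section
/- Let A be a skew brace. The socle Soc(A) = ker(λ) ∩ Z(A,+) is an ideal of A, where λ : (A,∘) → Aut(A,+) is the map a ↦ λ_a with λ_a(b) = -a + a∘b, and Z(A,+) is the center of the additive group. -/
def IsSkewBrace (A : Type*) [AddGroup A] [Group A] : Prop :=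
  ∀ a b c : A, a * (b + c) = a * b - a + a * c

/-- An ideal of a skew brace: a normal subgroup for both operations, stable
under all the maps λₐ : x ↦ -a + a∘x. -/
def IsIdeal (A : Type*) [AddGroup A] [Group A] (I : Set A) : Prop :=
  (∃ S : Subgroup A, S.Normal ∧ (S : Set A) = I) ∧
  (∃ T : AddSubgroup A, T.Normal ∧ (T : Set A) = I) ∧
  (∀ a x : A, x ∈ I → -a + a * x ∈ I)

/-! The map a ↦ λₐ is a homomorphism (A,∘) → Aut(A,+), so ker λ is a normal subgroup of (A,∘),
and on it a∘b = a + b; hence ker λ ∩ Z(A,+) is closed under both operations. For a in the socle,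
conjugation by g in (A,∘) is λ_g, and automorphisms preserve Z(A,+): this gives normality in
(A,∘) and λ-stability at once, while normality in (A,+) is centrality. -/

namespace IsSkewBrace

variable {A : Type*} [AddGroup A] [Group A]

def lambda (a b : A) : A := -a + a * b

def socle (A : Type*) [AddGroup A] [Group A] : Set A :=
  {a : A | (∀ b : A, lambda a b = b) ∧ (∀ b : A, a + b = b + a)}

variable (h : IsSkewBrace A)
include h

theorem mul_zero (a : A) : a * 0 = a := by
  have h00 := h a 0 0
  rw [add_zero, sub_eq_add_neg, add_assoc, left_eq_add, neg_add_eq_zero] at h00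
  exact h00.symm

theorem one_eq_zero : (1 : A) = 0 :=
  ((one_mul (0 : A)).symm.trans (h.mul_zero 1)).symm

theorem lambda_add (g x y : A) : lambda g (x + y) = lambda g x + lambda g y := by
  simp only [lambda, h g x y, sub_eq_add_neg, add_assoc]

theorem lambda_one (b : A) : lambda 1 b = b := by
  rw [lambda, one_mul, h.one_eq_zero, neg_zero, zero_add]

theorem lambda_mul (a b c : A) : lambda (a * b) c = lambda a (lambda b c) := by
  have mul_neg : a * -b = a - a * b + a := by
    have hb := h a b (-b)
    rw [add_neg_cancel, h.mul_zero] at hb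
    rw [eq_neg_add_of_add_eq hb.symm, neg_sub]
  simp only [lambda, h a (-b) (b * c), mul_neg, mul_assoc, sub_eq_add_neg, add_assoc,
    neg_add_cancel_left, add_neg_cancel_left]

theorem lambda_lambda_inv (a b : A) : lambda a (lambda a⁻¹ b) = b := by
  rw [← h.lambda_mul, mul_inv_cancel, h.lambda_one]

theorem lambda_inv_lambda (a b : A) : lambda a⁻¹ (lambda a b) = b := by
  rw [← h.lambda_mul, inv_mul_cancel, h.lambda_one]

def lambdaAddEquiv (a : A) : A ≃+ A where
  toFun := lambda a
  invFun := lambda a⁻¹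
  left_inv := h.lambda_inv_lambda a
  right_inv := h.lambda_lambda_inv a
  map_add' := h.lambda_add a

def lambdaHom : A →* Equiv.Perm A where
  toFun a := (h.lambdaAddEquiv a).toEquiv
  map_one' := Equiv.ext h.lambda_one
  map_mul' a b := Equiv.ext (h.lambda_mul a b)

theorem mem_ker_lambdaHom {a : A} : a ∈ h.lambdaHom.ker ↔ ∀ b, lambda a b = b :=
  MonoidHom.mem_ker.trans Equiv.ext_iff

theorem lambda_mem_center (g : A) {a : A} (ha : a ∈ AddSubgroup.center A) :
    lambda g a ∈ AddSubgroup.center A :=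
  AddEquivClass.apply_mem_center (h.lambdaAddEquiv g) ha

theorem mul_eq_add_of_mem_ker {a : A} (ha : a ∈ h.lambdaHom.ker) (b : A) : a * b = a + b :=
  neg_add_eq_iff_eq_add.mp ((h.mem_ker_lambdaHom.mp ha) b)

theorem inv_eq_neg_of_mem_ker {a : A} (ha : a ∈ h.lambdaHom.ker) : a⁻¹ = -a := by
  have := h.mul_eq_add_of_mem_ker ha a⁻¹
  rw [mul_inv_cancel, h.one_eq_zero] at this
  exact eq_neg_of_add_eq_zero_right this.symm

theorem mem_socle_iff {a : A} :
    a ∈ socle A ↔ a ∈ h.lambdaHom.ker ∧ a ∈ AddSubgroup.center A := by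
  rw [h.mem_ker_lambdaHom, AddSubgroup.mem_center_iff]
  exact and_congr Iff.rfl (forall_congr' fun _ => eq_comm)

theorem conj_eq_lambda_of_mem_socle (g : A) {a : A} (ha : a ∈ socle A) :
    g * a * g⁻¹ = lambda g a := by
  obtain ⟨hker, hcen⟩ := h.mem_socle_iff.mp ha
  have hcomm := AddSubgroup.mem_center_iff.mp (h.lambda_mem_center g hcen) (-g)
  calc g * a * g⁻¹ = g * (a + g⁻¹) := by rw [mul_assoc, h.mul_eq_add_of_mem_ker hker]
    _ = g + lambda g a - g := by
      rw [h g a g⁻¹, mul_inv_cancel, h.one_eq_zero, add_zero, lambda, add_neg_cancel_left]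
    _ = lambda g a := by rw [sub_eq_add_neg, add_assoc, ← hcomm, add_neg_cancel_left]

def socleSubgroup : Subgroup A where
  carrier := socle A
  one_mem' := h.mem_socle_iff.mpr
    ⟨one_mem _, h.one_eq_zero ▸ zero_mem (AddSubgroup.center A)⟩
  mul_mem' {a b} ha hb := by
    obtain ⟨hak, hac⟩ := h.mem_socle_iff.mp ha
    obtain ⟨hbk, hbc⟩ := h.mem_socle_iff.mp hb
    exact h.mem_socle_iff.mpr
      ⟨mul_mem hak hbk, h.mul_eq_add_of_mem_ker hak b ▸ add_mem hac hbc⟩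
  inv_mem' {a} ha := by
    obtain ⟨hak, hac⟩ := h.mem_socle_iff.mp ha
    exact h.mem_socle_iff.mpr ⟨inv_mem hak, h.inv_eq_neg_of_mem_ker hak ▸ neg_mem hac⟩

theorem socleSubgroup_normal : h.socleSubgroup.Normal where
  conj_mem a ha g := by
    obtain ⟨hak, hac⟩ := h.mem_socle_iff.mp ha
    refine h.mem_socle_iff.mpr ⟨h.lambdaHom.normal_ker.conj_mem a hak g, ?_⟩
    rw [h.conj_eq_lambda_of_mem_socle g ha]
    exact h.lambda_mem_center g hac

theorem lambda_mem_socle (g : A) {a : A} (ha : a ∈ socle A) : lambda g a ∈ socle A :=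
  h.conj_eq_lambda_of_mem_socle g ha ▸ h.socleSubgroup_normal.conj_mem a ha g

def socleAddSubgroup : AddSubgroup A where
  carrier := socle A
  zero_mem' := h.one_eq_zero ▸ h.socleSubgroup.one_mem
  add_mem' {_ b} ha hb :=
    h.mul_eq_add_of_mem_ker (h.mem_socle_iff.mp ha).1 b ▸ h.socleSubgroup.mul_mem ha hb
  neg_mem' ha :=
    h.inv_eq_neg_of_mem_ker (h.mem_socle_iff.mp ha).1 ▸ h.socleSubgroup.inv_mem ha

theorem socleAddSubgroup_normal : h.socleAddSubgroup.Normal where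
  conj_mem a ha g := by rwa [← ha.2 g, add_neg_cancel_right]

end IsSkewBrace

/-- The socle ker λ ∩ Z(A,+) is an ideal. -/
theorem socle_isIdeal (A : Type*) [AddGroup A] [Group A] (h : IsSkewBrace A) :
    IsIdeal A {a : A | (∀ b : A, -a + a * b = b) ∧ (∀ b : A, a + b = b + a)} :=
  ⟨⟨h.socleSubgroup, h.socleSubgroup_normal, rfl⟩,
    ⟨h.socleAddSubgroup, h.socleAddSubgroup_normal, rfl⟩,
    fun g _ => h.lambda_mem_socle g⟩
end

section
/- Every radical ring R gives rise to a two-sided skew brace of abelian type (R,+,∘) with x∘y = x + xy + y; conversely, if (A,+,∘) is a two-sided skew brace with abelian additive group, then defining xy = -x + x∘y - y makes (A,+,·) a radical ring. These constructions are mutually inverse. -/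
/-!
Ring to brace: associativity, the neutral element and both brace laws of `x ∘ y = x + xy + y`
are ring identities, and inverses are exactly what radicality provides.

Brace to ring: the two brace laws say that `xy = -x + x ∘ y - y` distributes over `+` on either
side. Expanding `x ∘ (y ∘ z)` and `(x ∘ y) ∘ z` with `x ∘ y = x + xy + y` and distributivity
gives `x(yz)` resp. `(xy)z` plus the same sum `x + y + z + xy + xz + yz`, so associativity
of `∘` yields associativity of the product after cancelling that sum.
-/

section RingToBrace

def circleOp {R : Type*} [Add R] [Mul R] (x y : R) : R := x + x * y + y

variable {R : Type*}

theorem circleOp_assoc [NonUnitalRing R] (x y z : R) :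
    circleOp (circleOp x y) z = circleOp x (circleOp y z) := by
  simp only [circleOp, mul_add, add_mul, mul_assoc]
  abel

variable [NonUnitalNonAssocRing R]

theorem zero_circleOp (x : R) : circleOp 0 x = x := by
  simp [circleOp]

theorem circleOp_zero (x : R) : circleOp x 0 = x := by
  simp [circleOp]

theorem circleOp_add (a b c : R) : circleOp a (b + c) = circleOp a b - a + circleOp a c := by
  simp only [circleOp, mul_add]
  abel

theorem add_circleOp (a b c : R) : circleOp (a + b) c = circleOp a c - c + circleOp b c := by
  simp only [circleOp, add_mul]
  abel

theorem neg_add_circleOp_sub (x y : R) : -x + circleOp x y - y = x * y := by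
  rw [circleOp]
  abel

end RingToBrace

section BraceToRing

def braceMul {A : Type*} [AddGroup A] [Group A] (x y : A) : A := -x + x * y - y

variable {A : Type*} [AddCommGroup A] [Group A]

theorem add_braceMul_add (x y : A) : x + braceMul x y + y = x * y := by
  rw [braceMul]
  abel

theorem braceMul_add (hA : IsSkewBrace A) (x y z : A) :
    braceMul x (y + z) = braceMul x y + braceMul x z := by
  simp only [braceMul, hA x y z]
  abel

theorem add_braceMul (hA : ∀ a b c : A, (a + b) * c = a * c - c + b * c) (x y z : A) :
    braceMul (x + y) z = braceMul x z + braceMul y z := by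
  simp only [braceMul, hA x y z]
  abel

theorem mul_mul_eq_braceMul_braceMul_add (hA : IsSkewBrace A) (x y z : A) :
    x * (y * z) = braceMul x (braceMul y z) +
      (x + y + z + braceMul x y + braceMul x z + braceMul y z) := by
  calc x * (y * z) = x + braceMul x (y + braceMul y z + z) + (y + braceMul y z + z) := by
        rw [add_braceMul_add, add_braceMul_add]
    _ = x + (braceMul x y + braceMul x (braceMul y z) + braceMul x z) +
          (y + braceMul y z + z) := by
        rw [braceMul_add hA, braceMul_add hA]
    _ = _ := by abel

theorem mul_mul_eq_braceMul_braceMul_add' (hA : ∀ a b c : A, (a + b) * c = a * c - c + b * c)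
    (x y z : A) :
    x * y * z = braceMul (braceMul x y) z +
      (x + y + z + braceMul x y + braceMul x z + braceMul y z) := by
  calc x * y * z = (x + braceMul x y + y) + braceMul (x + braceMul x y + y) z + z := by
        rw [add_braceMul_add, add_braceMul_add]
    _ = (x + braceMul x y + y) + (braceMul x z + braceMul (braceMul x y) z + braceMul y z) +
          z := by
        rw [add_braceMul hA, add_braceMul hA]
    _ = _ := by abel

theorem braceMul_assoc (hl : IsSkewBrace A)
    (hr : ∀ a b c : A, (a + b) * c = a * c - c + b * c) (x y z : A) :
    braceMul (braceMul x y) z = braceMul x (braceMul y z) := by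
  have h := mul_assoc x y z
  rw [mul_mul_eq_braceMul_braceMul_add hl, mul_mul_eq_braceMul_braceMul_add' hr] at h
  exact add_right_cancel h

end BraceToRing

/-- Rump's correspondence between radical rings and two-sided skew braces of
abelian type. (1) If R is a radical ring then (R,+,∘) with x∘y = x + xy + y is a
two-sided skew brace of abelian type, and -x + x∘y - y recovers the ring product.
(2) Conversely, a two-sided skew brace of abelian type A becomes a radical ring
with product xy = -x + x∘y - y, whose circle operation recovers ∘. -/
theorem radical_ring_two_sided_correspondence :
    (∀ (R : Type) [inst : NonUnitalRing R],
      (∀ x : R, ∃ y : R, x + x * y + y = 0 ∧ y + y * x + x = 0) →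
      ∀ circ : R → R → R, (∀ x y : R, circ x y = x + x * y + y) →
        (∀ x y z : R, circ (circ x y) z = circ x (circ y z)) ∧
        (∀ x : R, circ 0 x = x ∧ circ x 0 = x) ∧
        (∀ x : R, ∃ y : R, circ x y = 0 ∧ circ y x = 0) ∧
        (∀ a b c : R, circ a (b + c) = circ a b - a + circ a c) ∧
        (∀ a b c : R, circ (a + b) c = circ a c - c + circ b c) ∧
        (∀ x y : R, -x + circ x y - y = x * y)) ∧
    (∀ (A : Type) [instA : AddCommGroup A] [instM : Group A],
      IsSkewBrace A →
      (∀ a b c : A, (a + b) * c = a * c - c + b * c) →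
      ∀ mul : A → A → A, (∀ x y : A, mul x y = -x + x * y - y) →
        (∀ x y z : A, mul (mul x y) z = mul x (mul y z)) ∧
        (∀ x y z : A, mul x (y + z) = mul x y + mul x z) ∧
        (∀ x y z : A, mul (x + y) z = mul x z + mul y z) ∧
        (∀ x y : A, x + mul x y + y = x * y)) := by
  constructor
  · intro R _ hinv circ hc
    obtain rfl : circ = circleOp := funext₂ hc
    exact ⟨circleOp_assoc, fun x => ⟨zero_circleOp x, circleOp_zero x⟩, hinv, circleOp_add,
      add_circleOp, neg_add_circleOp_sub⟩
  · intro A _ _ hl hr mul hm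
    obtain rfl : mul = braceMul := funext₂ hm
    exact ⟨braceMul_assoc hl hr, braceMul_add hl, add_braceMul hr, add_braceMul_add⟩
end

section
/- Let A be a skew brace. Then the map r_A : A × A → A × A defined by r_A(x,y) = (-x + x∘y, (-x + x∘y)'∘x∘y), where z' denotes the inverse of z in (A,∘), is bijective and satisfies the Yang–Baxter equation r₁r₂r₁ = r₂r₁r₂ on A³, where r₁ = r_A × id and r₂ = id × r_A. -/
/-!
Write `λ_a(b) = -a + a ∘ b` and `ρ_a(b) = λ_a(b)' ∘ a ∘ b`, so that `r(a, b) = (λ_a(b), ρ_a(b))`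
and `λ_a(b) ∘ ρ_a(b) = a ∘ b`. Then `r` is invertible since `a` is recovered from
`u = λ_a(b)` and `u ∘ v = a ∘ b` as `a = u ∘ v - u`. The brace axiom says exactly that each
`λ_a` is additive, and then `a ↦ λ_a` is an action of `(A, ∘)` on `(A, +)`. From this,
`λ_a(b ∘ c) = λ_a(b) ∘ λ_{ρ_a(b)}(c)` and `ρ_{ρ_a(b)}(c) = ρ_a(b ∘ c)`, which give the first and
third components of the braid relation. Both sides of the braid relation preserve the
`∘`-product of the three coordinates, so the middle components agree too.
-/

namespace SkewBrace

variable {A : Type*} [AddGroup A] [Group A]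

def lam (a b : A) : A := -a + a * b

def rho (a b : A) : A := (lam a b)⁻¹ * a * b

theorem add_lam (a b : A) : a + lam a b = a * b := by
  simp [lam]

theorem lam_mul_rho (a b : A) : lam a b * rho a b = a * b := by
  simp [rho, mul_assoc]

theorem rho_eq (a b : A) : rho a b = (lam a b)⁻¹ * (a * b) :=
  mul_assoc _ _ _

theorem bijective_lam_rho : Function.Bijective fun p : A × A => (lam p.1 p.2, rho p.1 p.2) := by
  refine Function.bijective_iff_has_inverse.mpr
    ⟨fun q => (q.1 * q.2 - q.1, (q.1 * q.2 - q.1)⁻¹ * (q.1 * q.2)), ?_, ?_⟩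
  · rintro ⟨a, b⟩
    have ha : a * b - lam a b = a := by rw [← add_lam a b, add_sub_cancel_right]
    simp only [lam_mul_rho, ha, inv_mul_cancel_left]
  · rintro ⟨u, v⟩
    have hu : lam (u * v - u) ((u * v - u)⁻¹ * (u * v)) = u := by
      simp [lam]
    simp only [Prod.mk.injEq, rho_eq, hu, true_and]
    group

end SkewBrace

namespace IsSkewBrace

open SkewBrace

variable {A : Type*} [AddGroup A] [Group A] (h : IsSkewBrace A)
include h

theorem lam_add (a b c : A) : lam a (b + c) = lam a b + lam a c := by
  simp only [lam, h a b c, sub_eq_add_neg, add_assoc]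

def lamHom (a : A) : A →+ A :=
  AddMonoidHom.mk' (lam a) (h.lam_add a)

theorem lam_mul (a b c : A) : lam (a * b) c = lam a (lam b c) := by
  have hneg : lam a (-b) = -lam a b := map_neg (h.lamHom a) b
  calc lam (a * b) c = -(a * b) + a + (-a + a * (b * c)) := by simp [lam, mul_assoc, add_assoc]
    _ = -lam a b + lam a (b * c) := by simp [lam, add_assoc]
    _ = lam a (lam b c) := by rw [← hneg, ← h.lam_add]; rfl

theorem lam_apply_mul (a b c : A) : lam a (b * c) = lam a b * lam (rho a b) c := by
  calc lam a (b * c) = lam a b + lam a (lam b c) := by rw [← add_lam b c, h.lam_add]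
    _ = lam a b + lam (lam a b) (lam (rho a b) c) := by
      rw [← h.lam_mul, ← h.lam_mul, lam_mul_rho]
    _ = lam a b * lam (rho a b) c := add_lam _ _

theorem rho_rho (a b c : A) : rho (rho a b) c = rho a (b * c) := by
  rw [rho_eq, rho_eq a (b * c), h.lam_apply_mul, rho_eq]
  group

theorem braid_fst (x y z : A) :
    lam (lam x y) (lam (rho x y) z) = lam x (lam y z) := by
  rw [← h.lam_mul, lam_mul_rho, h.lam_mul]

theorem braid_thd (x y z : A) :
    rho (rho x y) z = rho (rho x (lam y z)) (rho y z) := by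
  rw [h.rho_rho, h.rho_rho, lam_mul_rho]

theorem braid_snd (x y z : A) :
    rho (lam x y) (lam (rho x y) z) = lam (rho x (lam y z)) (rho y z) := by
  have hl : lam (lam x y) (lam (rho x y) z) * rho (lam x y) (lam (rho x y) z) *
      rho (rho x y) z = x * y * z := by
    rw [lam_mul_rho, mul_assoc, lam_mul_rho, ← mul_assoc, lam_mul_rho]
  have hr : lam x (lam y z) * lam (rho x (lam y z)) (rho y z) *
      rho (rho x (lam y z)) (rho y z) = x * y * z := by
    rw [mul_assoc, lam_mul_rho, ← mul_assoc, lam_mul_rho, mul_assoc, lam_mul_rho, mul_assoc]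
  rw [h.braid_fst, h.braid_thd, ← hr] at hl
  exact mul_left_cancel (mul_right_cancel hl)

end IsSkewBrace

open SkewBrace in
/-- The canonical solution to the Yang–Baxter equation associated with a skew
brace: r(x,y) = (-x + x∘y, (-x + x∘y)' ∘ x ∘ y) is bijective and satisfies the
braid relation r₁ ∘ r₂ ∘ r₁ = r₂ ∘ r₁ ∘ r₂. -/
theorem skewBrace_yang_baxter (A : Type*) [AddGroup A] [Group A]
    (h : IsSkewBrace A)
    (rA : A × A → A × A)
    (hrA : ∀ x y : A, rA (x, y) = (-x + x * y, (-x + x * y)⁻¹ * x * y))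
    (r₁ r₂ : A × A × A → A × A × A)
    (hr₁ : ∀ x y z : A, r₁ (x, y, z) = ((rA (x, y)).1, (rA (x, y)).2, z))
    (hr₂ : ∀ x y z : A, r₂ (x, y, z) = (x, rA (y, z))) :
    Function.Bijective rA ∧ r₁ ∘ r₂ ∘ r₁ = r₂ ∘ r₁ ∘ r₂ := by
  have hrA' : ∀ x y : A, rA (x, y) = (lam x y, rho x y) := hrA
  refine ⟨?_, ?_⟩
  · have hr : rA = fun p => (lam p.1 p.2, rho p.1 p.2) := funext fun p => hrA' p.1 p.2
    exact hr ▸ bijective_lam_rho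
  · funext ⟨x, y, z⟩
    simp only [Function.comp_apply, hr₁, hr₂, hrA', Prod.mk.injEq]
    exact ⟨h.braid_fst x y z, h.braid_snd x y z, h.braid_thd x y z⟩
end

section
/- Let A be a skew brace and r_A(x,y) = (-x + x∘y, (-x + x∘y)'∘x∘y) the associated solution. Then r_A² = id if and only if the additive group (A,+) is abelian. -/
theorem neg_add_add_eq_self_iff {G : Type*} [AddGroup G] (a b : G) :
    -b + a + b = a ↔ AddCommute a b := by
  rw [add_assoc, neg_add_eq_iff_eq_add]
  rfl

section Solution

variable {A : Type*} [AddGroup A] [Group A] {r : A × A → A × A}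

theorem solution_solution_apply
    (hr : ∀ x y : A, r (x, y) = (-x + x * y, (-x + x * y)⁻¹ * x * y)) (x y : A) :
    r (r (x, y)) = (-(x * y) + x + x * y, (-(x * y) + x + x * y)⁻¹ * x * y) := by
  have hmul : (-x + x * y) * ((-x + x * y)⁻¹ * x * y) = x * y := by group
  rw [hr, hr, hmul, neg_add_rev, neg_neg, mul_assoc _ (-x + x * y), hmul, mul_assoc]

theorem solution_solution_apply_eq_self_iff
    (hr : ∀ x y : A, r (x, y) = (-x + x * y, (-x + x * y)⁻¹ * x * y)) (x y : A) :
    r (r (x, y)) = (x, y) ↔ AddCommute x (x * y) := by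
  rw [solution_solution_apply hr, ← neg_add_add_eq_self_iff]
  constructor
  · exact congrArg Prod.fst
  · intro hx
    rw [hx, inv_mul_cancel, one_mul]

end Solution

theorem skewBrace_solution_involutive_iff_general (A : Type*) [AddGroup A] [Group A]
    (rA : A × A → A × A)
    (hrA : ∀ x y : A, rA (x, y) = (-x + x * y, (-x + x * y)⁻¹ * x * y)) :
    rA ∘ rA = id ↔ ∀ a b : A, a + b = b + a := by
  simp only [funext_iff, Prod.forall, Function.comp_apply, id_eq,
    solution_solution_apply_eq_self_iff hrA]
  constructor
  · intro hcomm a b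
    simpa only [mul_inv_cancel_left] using (hcomm a (a⁻¹ * b)).eq
  · intro hcomm x y
    exact hcomm x (x * y)

/-- The solution associated with a skew brace is involutive iff the additive
group is abelian. -/
theorem skewBrace_solution_involutive_iff (A : Type*) [AddGroup A] [Group A]
    (h : IsSkewBrace A)
    (rA : A × A → A × A)
    (hrA : ∀ x y : A, rA (x, y) = (-x + x * y, (-x + x * y)⁻¹ * x * y)) :
    rA ∘ rA = id ↔ ∀ a b : A, a + b = b + a :=
  skewBrace_solution_involutive_iff_general A rA hrA
end

section
/- Let X be a group and r : X² → X² defined by r(x,y) = (x²y, y⁻¹x⁻¹y). Then r satisfies the Yang–Baxter equation r₁r₂r₁ = r₂r₁r₂ on X³. -/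
/-! Both composites send `(x, y, z)` to `(x²y²z, (yz)⁻¹ y⁻¹x⁻² (yz), (yz)⁻¹ x (yz))`, as a direct
computation in the free group on `x, y, z` shows. -/

/-- Wada's solution r(x,y) = (x²y, y⁻¹x⁻¹y) on a group satisfies the
Yang–Baxter equation. -/
theorem wada_yang_baxter (X : Type*) [Group X]
    (r : X × X → X × X) (hr : ∀ x y : X, r (x, y) = (x ^ 2 * y, y⁻¹ * x⁻¹ * y))
    (r₁ r₂ : X × X × X → X × X × X)
    (hr₁ : ∀ x y z : X, r₁ (x, y, z) = ((r (x, y)).1, (r (x, y)).2, z))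
    (hr₂ : ∀ x y z : X, r₂ (x, y, z) = (x, r (y, z))) :
    r₁ ∘ r₂ ∘ r₁ = r₂ ∘ r₁ ∘ r₂ := by
  funext ⟨x, y, z⟩
  let w := y * z
  calc (r₁ ∘ r₂ ∘ r₁) (x, y, z)
      = (x ^ 2 * y ^ 2 * z, w⁻¹ * y⁻¹ * x⁻¹ ^ 2 * w, w⁻¹ * x * w) := by
        simp only [Function.comp, hr₁, hr₂, hr, Prod.mk.injEq, w, sq, mul_inv_rev]
        refine ⟨?_, ?_, ?_⟩ <;> group
    _ = (r₂ ∘ r₁ ∘ r₂) (x, y, z) := by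
        simp only [Function.comp, hr₁, hr₂, hr, Prod.mk.injEq, w, sq, mul_inv_rev]
        refine ⟨?_, ?_, ?_⟩ <;> group
end
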